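/- arXiv:2207.06887 — 2 statements merged into one kernel-verified Lean document; each statement's English description precedes it below -/
import Mathlib

section
/- Let T be a finite tree rooted at a centroid r. Then the sum of cut numbers S_c(T) = Σ_{e ∈ E(T)} min(|T_1(e)|, |T_2(e)|) (where removing edge e splits T into T_1(e) and T_2(e)) equals the sum of distances S_d(T) = Σ_{v} d_T(r,v). -/
/-- Size of the subtree rooted at `v` when the tree is rooted at `r`. -/
noncomputable def subtreeSize {V : Type} [Fintype V] [DecidableEq V]
    (T : SimpleGraph V) (r v : V) : ℕ :=
  (Finset.univ.filter (fun u => T.dist r v + T.dist v u = T.dist r u)).card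

/-- The cut number of an edge `e = s(u,v)` of a tree: the size of the smaller of the
two components obtained by removing `e` (a vertex `x` lies on the `v`-side iff it is
strictly closer to `v` than to `u`). -/
noncomputable def cutNum {V : Type} [Fintype V] [DecidableEq V]
    (T : SimpleGraph V) (e : Sym2 V) : ℕ :=
  Sym2.lift ⟨fun u v =>
    min ((Finset.univ.filter fun x => T.dist x u < T.dist x v).card)
        ((Finset.univ.filter fun x => T.dist x v < T.dist x u).card),
    fun u v => min_comm _ _⟩ e

/-!
Orient each edge `uv` of the tree so that `u` is closer to the centroid `r`. The side of `v` lies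
in the branch of `r` through `v`, so by the centroid condition it is the smaller side, and
`cutNum uv` counts the vertices `x` that `uv` separates from `r`. Swapping the order of summation,
it remains to count, for each `x`, the edges separating `x` from `r`: every edge of a tree is a
bridge, so these are exactly the edges of a geodesic from `r` to `x`, and there are `dist r x`.
-/

open Finset

namespace SimpleGraph

section

variable {V : Type*} {G : SimpleGraph V} {a b u v : V}

lemma Walk.dist_add_one_add_dist_le_length_of_mem_edges (p : G.Walk a b)
    (h : s(u, v) ∈ p.edges) :
    G.dist a u + 1 + G.dist v b ≤ p.length ∨ G.dist a v + 1 + G.dist u b ≤ p.length := by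
  obtain ⟨i, hi, he⟩ := p.mk_mem_edges_iff_exists.1 h
  have hsplit : G.dist a (p.getVert i) + 1 + G.dist (p.getVert (i + 1)) b ≤ p.length := by
    have htake := (dist_le (p.take i)).trans_eq (p.take_length i)
    have hdrop := (dist_le (p.drop (i + 1))).trans_eq (p.drop_length (i + 1))
    have := min_le_left i p.length
    omega
  rcases Sym2.eq_iff.1 he with ⟨rfl, rfl⟩ | ⟨rfl, rfl⟩
  · exact .inl hsplit
  · exact .inr hsplit

lemma reachable_of_dist_lt (huv : G.Adj u v) (h : G.dist a u < G.dist a v) : G.Reachable a u :=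
  (Reachable.of_dist_ne_zero (by omega)).trans huv.symm.reachable

lemma reachable_deleteEdges_of_dist_lt (huv : G.Adj u v) (h : G.dist a u < G.dist a v) :
    (G.deleteEdges {s(u, v)}).Reachable a u := by
  obtain ⟨q, hq⟩ := (reachable_of_dist_lt huv h).exists_walk_length_eq_dist
  refine reachable_deleteEdges_iff_exists_walk.2 ⟨q, fun hmem => ?_⟩
  have := q.dist_add_one_add_dist_le_length_of_mem_edges hmem
  omega

lemma IsAcyclic.mem_edges_of_dist_lt (hG : G.IsAcyclic) (huv : G.Adj u v)
    (ha : G.dist a u < G.dist a v) (hb : G.dist b v < G.dist b u) (p : G.Walk a b) :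
    s(u, v) ∈ p.edges := by
  refine p.mem_edges_of_not_reachable_deleteEdges fun hab => ?_
  have hbv := reachable_deleteEdges_of_dist_lt huv.symm hb
  rw [Sym2.eq_swap] at hbv
  exact isBridge_iff.1 (isAcyclic_iff_forall_adj_isBridge.1 hG huv)
    (((reachable_deleteEdges_of_dist_lt huv ha).symm.trans hab).trans hbv)

lemma IsAcyclic.dist_eq_dist_add_one_add_dist (hG : G.IsAcyclic) (huv : G.Adj u v)
    (ha : G.dist a u < G.dist a v) (hb : G.dist b v < G.dist b u) :
    G.dist a b = G.dist a u + 1 + G.dist v b := by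
  have hau := reachable_of_dist_lt huv ha
  have hvb := (reachable_of_dist_lt huv.symm hb).symm
  obtain ⟨p, hp⟩ := (hau.trans (huv.reachable.trans hvb)).exists_walk_length_eq_dist
  have hlower :=
    p.dist_add_one_add_dist_le_length_of_mem_edges (hG.mem_edges_of_dist_lt huv ha hb p)
  have hupper : G.dist a b ≤ G.dist a u + G.dist u b := hau.dist_triangle_left b
  have : G.dist u b ≤ G.dist u v + G.dist v b := hvb.dist_triangle_right u
  rw [dist_eq_one_iff_adj.2 huv] at this
  rw [dist_comm (u := b), dist_comm (u := b)] at hb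
  omega

def Separates (G : SimpleGraph V) (a b : V) (e : Sym2 V) : Prop :=
  ∃ u v, e = s(u, v) ∧ G.dist a u < G.dist a v ∧ G.dist b v < G.dist b u

lemma separates_mk_iff_of_dist_lt (ha : G.dist a u < G.dist a v) :
    G.Separates a b s(u, v) ↔ G.dist b v < G.dist b u := by
  constructor
  · rintro ⟨u', v', he, ha', hb'⟩
    rcases Sym2.eq_iff.1 he with ⟨rfl, rfl⟩ | ⟨rfl, rfl⟩ <;> omega
  · exact fun hb => ⟨u, v, rfl, ha, hb⟩

lemma Connected.separates_of_dist_add_one_add_dist_le (hG : G.Connected)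
    (h : G.dist a u + 1 + G.dist v b ≤ G.dist a b) : G.Separates a b s(u, v) := by
  have : G.dist a b ≤ G.dist a v + G.dist v b := hG.dist_triangle
  have : G.dist a b ≤ G.dist a u + G.dist u b := hG.dist_triangle
  refine ⟨u, v, rfl, by omega, ?_⟩
  rw [dist_comm (u := b), dist_comm (u := b)]
  omega

lemma IsTree.separates_iff_mem_edges (hG : G.IsTree) {p : G.Walk a b}
    (hp : p.length = G.dist a b) {e : Sym2 V} (he : e ∈ G.edgeSet) :
    G.Separates a b e ↔ e ∈ p.edges := by
  induction e with | h u v => ?_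
  refine ⟨fun ⟨u', v', he', ha, hb⟩ => ?_, fun hmem => ?_⟩
  · rw [he'] at he ⊢
    exact hG.isAcyclic.mem_edges_of_dist_lt he ha hb p
  · rcases p.dist_add_one_add_dist_le_length_of_mem_edges hmem with h | h
    · exact hG.connected.separates_of_dist_add_one_add_dist_le (h.trans_eq hp)
    · rw [Sym2.eq_swap]
      exact hG.connected.separates_of_dist_add_one_add_dist_le (h.trans_eq hp)

variable [Fintype V] [DecidableEq V]

noncomputable instance (a b : V) (e : Sym2 V) : Decidable (G.Separates a b e) := by
  unfold Separates; infer_instance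

lemma IsTree.dist_eq_card_separates [DecidableRel G.Adj] (hG : G.IsTree) (a b : V) :
    G.dist a b = #{e ∈ G.edgeFinset | G.Separates a b e} := by
  obtain ⟨p, hpath, hp⟩ := hG.connected.exists_path_of_dist a b
  have : {e ∈ G.edgeFinset | G.Separates a b e} = p.edges.toFinset := by
    ext e
    simp only [mem_filter, mem_edgeFinset, List.mem_toFinset]
    exact ⟨fun ⟨he, hs⟩ => (hG.separates_iff_mem_edges hp he).1 hs,
      fun hmem => ⟨p.edges_subset_edgeSet hmem,
        (hG.separates_iff_mem_edges hp (p.edges_subset_edgeSet hmem)).2 hmem⟩⟩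
  rw [this, List.toFinset_card_of_nodup hpath.edges_nodup, Walk.length_edges, hp]

end

section

variable {V : Type} [Fintype V] [DecidableEq V] {G : SimpleGraph V} {u v : V}

lemma IsTree.exists_adj_card_le_subtreeSize (hG : G.IsTree) {r : V} (huv : G.Adj u v)
    (hr : G.dist r u < G.dist r v) :
    ∃ c, G.Adj r c ∧ #{x | G.dist x v < G.dist x u} ≤ subtreeSize G r c := by
  obtain ⟨p, hp⟩ := hG.connected.exists_walk_length_eq_dist r v
  have hnil : ¬ p.Nil := by rw [← Walk.length_eq_zero_iff]; omega
  refine ⟨p.snd, p.adj_snd hnil, card_le_card fun x hx => ?_⟩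
  simp only [mem_filter, mem_univ, true_and] at hx ⊢
  have hrx := hG.isAcyclic.dist_eq_dist_add_one_add_dist huv hr hx
  have hrv : G.dist r v ≤ G.dist r u + 1 :=
    (hG.connected.dist_triangle).trans_eq (by rw [dist_eq_one_iff_adj.2 huv])
  have hrc : G.dist r p.snd = 1 := dist_eq_one_iff_adj.2 (p.adj_snd hnil)
  have hcv : G.dist p.snd v ≤ p.length - 1 := (dist_le p.tail).trans_eq p.length_tail
  have : G.dist p.snd x ≤ G.dist p.snd v + G.dist v x := hG.connected.dist_triangle
  have : G.dist r x ≤ G.dist r p.snd + G.dist p.snd x := hG.connected.dist_triangle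
  omega

lemma IsTree.cutNum_eq_card_separates (hG : G.IsTree) {r : V}
    (hcentroid : ∀ c, G.Adj r c → 2 * subtreeSize G r c ≤ Fintype.card V)
    {e : Sym2 V} (he : e ∈ G.edgeSet) : cutNum G e = #{x | G.Separates r x e} := by
  induction e with | h u v => ?_
  rw [mem_edgeSet] at he
  wlog hr : G.dist r u < G.dist r v generalizing u v with H
  · rw [Sym2.eq_swap]
    have := hG.dist_eq_dist_add_one_of_adj r he
    exact H v u he.symm (by omega)
  obtain ⟨c, hrc, hcard⟩ := hG.exists_adj_card_le_subtreeSize he hr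
  have hcompl :
      #{x | G.dist x u < G.dist x v} + #{x | G.dist x v < G.dist x u} = Fintype.card V := by
    rw [filter_congr (p := fun x => G.dist x v < G.dist x u)
      (q := fun x => ¬ G.dist x u < G.dist x v) fun x _ => by
        have := hG.dist_eq_dist_add_one_of_adj x he
        omega, card_filter_add_card_filter_not, card_univ]
  have hcut : cutNum G s(u, v) = #{x | G.dist x v < G.dist x u} := by
    simp only [cutNum, Sym2.lift_mk]
    have := hcentroid c hrc
    exact min_eq_right (by omega)
  simp only [hcut, separates_mk_iff_of_dist_lt hr]

end

end SimpleGraph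

open SimpleGraph

theorem sum_cut_numbers_eq_sum_dist {V : Type} [Fintype V] [DecidableEq V]
    (T : SimpleGraph V) [DecidableRel T.Adj] (hT : T.IsTree) (r : V)
    (hcentroid : ∀ c, T.Adj r c → 2 * subtreeSize T r c ≤ Fintype.card V) :
    ∑ e ∈ T.edgeFinset, cutNum T e = ∑ v, T.dist r v := by
  calc ∑ e ∈ T.edgeFinset, cutNum T e
      = ∑ e ∈ T.edgeFinset, #{x | T.Separates r x e} :=
        sum_congr rfl fun e he => hT.cutNum_eq_card_separates hcentroid (mem_edgeFinset.1 he)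
    _ = ∑ x, #{e ∈ T.edgeFinset | T.Separates r x e} :=
        sum_card_bipartiteAbove_eq_sum_card_bipartiteBelow _
    _ = ∑ x, T.dist r x := sum_congr rfl fun x _ => (hT.dist_eq_card_separates r x).symm
end

section
/- Let G be a connected graph and T_m the BFS-tree (over all possible roots) minimizing S_d; let r be its root. Then r is a centroid of T_m, i.e., no child subtree of r in T_m contains more than half of the vertices. -/
/-- `T` is a BFS-tree of `G` rooted at `r`: a spanning tree realizing the
graph distances from `r`. -/
def IsBFSTree {V : Type} (G T : SimpleGraph V) (r : V) : Prop :=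
  T ≤ G ∧ T.IsTree ∧ ∀ v, T.dist r v = G.dist r v

open Finset

namespace SimpleGraph

variable {V : Type*} {G : SimpleGraph V}

lemma Adj.dist_le_dist_add_one {a b : V} (h : G.Adj a b) (v : V) :
    G.dist b v ≤ G.dist a v + 1 := by
  have := h.diff_dist_adj (u := v)
  rw [dist_comm (u := a), dist_comm (u := b)]
  omega

lemma Reachable.exists_adj_dist_add_one {u v : V} (h : G.Reachable u v) (hne : u ≠ v) :
    ∃ w, G.Adj w v ∧ G.dist u w + 1 = G.dist u v := by
  obtain ⟨p, hp⟩ := h.exists_walk_length_eq_dist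
  have hnil : ¬ p.Nil := p.not_nil_of_ne hne
  have hadj := p.adj_penultimate hnil
  refine ⟨p.penultimate, hadj, le_antisymm ?_ ?_⟩
  · have := G.dist_le p.dropLast
    have := p.length_dropLast_add_one hnil
    omega
  · have := hadj.reachable.dist_triangle_right u
    rw [dist_eq_one_iff_adj.mpr hadj] at this
    exact this

lemma exists_walk_length_eq_of_parent {c : V} {f : V → ℕ} (p : V → V) (hc : f c = 0)
    (hp : ∀ v ≠ c, G.Adj (p v) v ∧ f (p v) + 1 = f v) (v : V) :
    ∃ w : G.Walk c v, w.length = f v := by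
  induction hn : f v using Nat.strong_induction_on generalizing v with
  | _ n ih =>
    by_cases hv : v = c
    · subst hv
      exact ⟨.nil, by simp [hc, ← hn]⟩
    · obtain ⟨hadj, hf⟩ := hp v hv
      obtain ⟨w, hw⟩ := ih (f (p v)) (by omega) (p v) rfl
      exact ⟨w.concat hadj, by simp [hw, ← hn, ← hf]⟩

lemma isAcyclic_of_subsingleton_setOf_adj_le {α : Type*} [LinearOrder α] (f : V → α)
    (hf : ∀ a, {b | G.Adj a b ∧ f b ≤ f a}.Subsingleton) : G.IsAcyclic := by
  classical
  intro v c hc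
  obtain ⟨m, hm, hmax⟩ := c.support.toFinset.exists_max_image f ⟨v, by simp⟩
  rw [List.mem_toFinset] at hm
  set c' := c.rotate m hm
  have hc' : c'.IsCycle := hc.rotate hm
  have hlow : ∀ x ∈ c'.support, f x ≤ f m := fun x hx =>
    hmax x (List.mem_toFinset.mpr ((c.mem_support_rotate_iff m hm).mp hx))
  -- The two cycle neighbours of the highest vertex `m` are distinct and both lie below `m`.
  apply hc'.snd_ne_penultimate
  apply hf m
  · exact ⟨c'.adj_snd hc'.not_nil, hlow _ (c'.getVert_mem_support 1)⟩
  · exact ⟨(c'.adj_penultimate hc'.not_nil).symm, hlow _ (c'.getVert_mem_support _)⟩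

end SimpleGraph

open SimpleGraph

section BFSTree

variable {V : Type} {G T : SimpleGraph V} {r : V}

lemma IsBFSTree.connected (hT : IsBFSTree G T r) : G.Connected :=
  hT.2.1.connected.mono hT.1

lemma IsBFSTree.sum_dist [Fintype V] (hT : IsBFSTree G T r) :
    ∑ v, T.dist r v = ∑ v, G.dist r v :=
  sum_congr rfl fun v _ => hT.2.2 v

lemma IsBFSTree.dist_lt_of_dist_add_dist_eq (hT : IsBFSTree G T r) {c v : V} (hc : T.Adj r c)
    (hv : T.dist r c + T.dist c v = T.dist r v) : G.dist c v < G.dist r v := by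
  have hcv : G.dist c v ≤ T.dist c v := (hT.2.1.connected c v).dist_anti hT.1
  rw [dist_eq_one_iff_adj.mpr hc, hT.2.2] at hv
  omega

theorem SimpleGraph.Connected.exists_isBFSTree (hG : G.Connected) (c : V) :
    ∃ T, IsBFSTree G T c := by
  have hpar : ∀ v, ∃ w, v ≠ c → G.Adj w v ∧ G.dist c w + 1 = G.dist c v := fun v => by
    by_cases hv : v = c
    · exact ⟨c, fun h => absurd hv h⟩
    · obtain ⟨w, hw⟩ := (hG c v).exists_adj_dist_add_one (Ne.symm hv)
      exact ⟨w, fun _ => hw⟩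
  choose p hp using hpar
  set T : SimpleGraph V := fromRel fun a b => a ≠ c ∧ b = p a
  have hTadj : ∀ v ≠ c, T.Adj (p v) v ∧ G.dist c (p v) + 1 = G.dist c v := fun v hv =>
    ⟨(fromRel_adj _ _ _).mpr ⟨(hp v hv).1.ne, .inr ⟨hv, rfl⟩⟩, (hp v hv).2⟩
  have hwalk := exists_walk_length_eq_of_parent p dist_self hTadj
  have hle : T ≤ G := fun a b hab => by
    obtain ⟨-, ⟨ha, rfl⟩ | ⟨hb, rfl⟩⟩ := (fromRel_adj _ _ _).mp hab
    exacts [(hp a ha).1.symm, (hp b hb).1]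
  have hconn : T.Connected := (connected_iff_exists_forall_reachable T).mpr
    ⟨c, fun v => (hwalk v).choose.reachable⟩
  have hacyc : T.IsAcyclic := isAcyclic_of_subsingleton_setOf_adj_le (G.dist c) fun a => by
    suffices ∀ b, T.Adj a b → G.dist c b ≤ G.dist c a → b = p a from
      fun b hb b' hb' => (this b hb.1 hb.2).trans (this b' hb'.1 hb'.2).symm
    intro b hab hba
    obtain ⟨-, ⟨-, rfl⟩ | ⟨hb, rfl⟩⟩ := (fromRel_adj _ _ _).mp hab
    · rfl
    · have := (hp b hb).2
      omega
  refine ⟨T, hle, ⟨hconn, hacyc⟩, fun v => le_antisymm ?_ ((hconn c v).dist_anti hle)⟩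
  obtain ⟨w, hw⟩ := hwalk v
  exact hw ▸ T.dist_le w

end BFSTree

lemma two_mul_card_le_of_sum_le {ι : Type*} [Fintype ι] [DecidableEq ι] (S : Finset ι)
    {f g : ι → ℕ} (hS : ∀ i ∈ S, g i < f i) (hSc : ∀ i ∉ S, g i ≤ f i + 1)
    (hsum : ∑ i, f i ≤ ∑ i, g i) : 2 * #S ≤ Fintype.card ι := by
  have hin : ∑ i ∈ S, (g i + 1) ≤ ∑ i ∈ S, f i := sum_le_sum hS
  have hout : ∑ i ∈ Sᶜ, g i ≤ ∑ i ∈ Sᶜ, (f i + 1) :=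
    sum_le_sum fun i hi => hSc i (mem_compl.mp hi)
  simp only [sum_add_distrib, sum_const, smul_eq_mul, mul_one] at hin hout
  have := S.sum_add_sum_compl f
  have := S.sum_add_sum_compl g
  have := S.card_add_card_compl
  omega

theorem optimal_bfs_tree_root_is_centroid_general {V : Type} [Fintype V] [DecidableEq V]
    (G Tm : SimpleGraph V) (r : V) (hBFS : IsBFSTree G Tm r)
    (hmin : ∀ (r' : V) (T' : SimpleGraph V), IsBFSTree G T' r' →
      ∑ v, Tm.dist r v ≤ ∑ v, T'.dist r' v) :
    ∀ c, Tm.Adj r c → 2 * subtreeSize Tm r c ≤ Fintype.card V := by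
  intro c hc
  obtain ⟨T', hT'⟩ := hBFS.connected.exists_isBFSTree c
  refine two_mul_card_le_of_sum_le _ (f := G.dist r) (g := G.dist c)
    (fun v hv => hBFS.dist_lt_of_dist_add_dist_eq hc (mem_filter.mp hv).2)
    (fun v _ => (hBFS.1 hc).dist_le_dist_add_one v) ?_
  calc ∑ v, G.dist r v = ∑ v, Tm.dist r v := hBFS.sum_dist.symm
    _ ≤ ∑ v, T'.dist c v := hmin c T' hT'
    _ = ∑ v, G.dist c v := hT'.sum_dist

theorem optimal_bfs_tree_root_is_centroid {V : Type} [Fintype V] [DecidableEq V]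
    (G Tm : SimpleGraph V) (r : V) (hG : G.Connected) (hBFS : IsBFSTree G Tm r)
    (hmin : ∀ (r' : V) (T' : SimpleGraph V), IsBFSTree G T' r' →
      ∑ v, Tm.dist r v ≤ ∑ v, T'.dist r' v) :
    ∀ c, Tm.Adj r c → 2 * subtreeSize Tm r c ≤ Fintype.card V :=
  optimal_bfs_tree_root_is_centroid_general G Tm r hBFS hmin
end
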